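/- Dominance lemma: For any fair asynchronous activation sequence starting from the all-empty configuration on a path of k particles (with asynchronous capacity κ and parallel capacity κ' = κ − α), letting C_i^A denote the asynchronous configuration after round i and C_i the greedy parallel configuration after round i, we have for every i and every index j that the suffix sum Σ_{ℓ≥j} C_i^A(P_ℓ) ≥ Σ_{ℓ≥j} C_i(P_ℓ). -/

import Mathlib

open scoped Classical

/-- Energy received by particle `j` in one greedy parallel round (parallel capacity `κ'`). -/
noncomputable def recvE (α κ' : ℝ) (B : ℕ → ℝ) (j : ℕ) : ℝ :=
  if j = 0 then min α (κ' - B 0)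
  else if α ≤ B (j - 1) ∧ B j < κ' then min α (κ' - B j) else 0

/-- Energy sent by particle `j` to `j+1` in one greedy parallel round. -/
noncomputable def sendE (α κ' : ℝ) (k : ℕ) (B : ℕ → ℝ) (j : ℕ) : ℝ :=
  if j + 1 < k then recvE α κ' B (j + 1) else 0

/-- One greedy parallel round of the energy schedule on a path of `k` particles. -/
noncomputable def stepE (α κ' : ℝ) (k : ℕ) (B : ℕ → ℝ) : ℕ → ℝ :=
  fun j => B j + recvE α κ' B j - sendE α κ' k B j

/-- Asynchronous activation of particle `j` (capacity `κ`): if `j = 0` it first harvests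
`min α (κ - bat)` from the external source; then, if `j+1 < k`, `bat(P_j) ≥ α` and
`bat(P_{j+1}) < κ`, it transfers `min (α, κ - bat(P_{j+1}))` to `P_{j+1}`. -/
noncomputable def actA (κ α : ℝ) (k : ℕ) (j : ℕ) (C : ℕ → ℝ) : ℕ → ℝ :=
  let C1 : ℕ → ℝ := fun i => if j = 0 ∧ i = 0 then min (C 0 + α) κ else C i
  if j + 1 < k ∧ α ≤ C1 j ∧ C1 (j + 1) < κ then
    fun i =>
      if i = j then C1 j - min α (κ - C1 (j + 1))
      else if i = j + 1 then C1 (j + 1) + min α (κ - C1 (j + 1))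
      else C1 i
  else C1

/-- One asynchronous round: the particles listed in `L` are activated in order. -/
noncomputable def roundA (κ α : ℝ) (k : ℕ) (L : List ℕ) (C : ℕ → ℝ) : ℕ → ℝ :=
  L.foldl (fun C j => actA κ α k j C) C

/-- The asynchronous configuration after `t` rounds, starting from all batteries empty,
where `rounds t` lists the activations of asynchronous round `t`. -/
noncomputable def asyncCfg (κ α : ℝ) (k : ℕ) (rounds : ℕ → List ℕ) : ℕ → ℕ → ℝ
  | 0 => fun _ => 0
  | t + 1 => roundA κ α k (rounds t) (asyncCfg κ α k rounds t)

/-!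
A parallel round adds exactly `recvE B j ≤ α` to the suffix sum from `j`, while an asynchronous
activation only harvests or pushes energy to the right, so it never decreases a suffix sum.
Asynchronous batteries stay multiples of `α`, so every asynchronous transfer moves a full `α`.
Hence, by induction on rounds, the activation of the sender of `j` (present in every fair round)
raises the asynchronous suffix sum from `j` by `α`, unless the receiver is already above the
parallel capacity `κ - α` or the sender is empty; in those two cases domination of the suffix
from `j + 1`, respectively from the sender, already provides the missing `recvE B j`.
-/

namespace EnergyPath

variable {k : ℕ}

noncomputable def suffixSum (k : ℕ) (C : ℕ → ℝ) (j : ℕ) : ℝ := ∑ ℓ ∈ Finset.Ico j k, C ℓ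

lemma suffixSum_eq_add {C : ℕ → ℝ} {j : ℕ} (hj : j < k) :
    suffixSum k C j = C j + suffixSum k C (j + 1) :=
  Finset.sum_eq_sum_Ico_succ_bot hj C

lemma suffixSum_of_le {C : ℕ → ℝ} {j : ℕ} (hj : k ≤ j) : suffixSum k C j = 0 := by
  simp [suffixSum, hj]

lemma suffixSum_mono {C D : ℕ → ℝ} (h : C ≤ D) (j : ℕ) : suffixSum k C j ≤ suffixSum k D j :=
  Finset.sum_le_sum fun ℓ _ => h ℓ

lemma suffixSum_move {C : ℕ → ℝ} {m : ℕ} (hm : m + 1 < k) (t : ℝ) (j : ℕ) :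
    suffixSum k (fun i => if i = m then C m - t else if i = m + 1 then C (m + 1) + t else C i) j
      = suffixSum k C j + if j = m + 1 then t else 0 := by
  have hpt : ∀ i, (if i = m then C m - t else if i = m + 1 then C (m + 1) + t else C i)
      = C i + ((if i = m + 1 then t else 0) - if i = m then t else 0) := by
    intro i
    split_ifs <;> first | omega | (subst_vars; ring)
  simp only [suffixSum, hpt, Finset.sum_add_distrib, Finset.sum_sub_distrib, Finset.sum_ite_eq',
    Finset.mem_Ico]
  split_ifs <;> first | omega | ring

lemma suffixSum_stepE {α κ' : ℝ} {B : ℕ → ℝ} {j : ℕ} (hj : j < k) :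
    suffixSum k (stepE α κ' k B) j = suffixSum k B j + recvE α κ' B j := by
  set g : ℕ → ℝ := fun ℓ => if ℓ < k then recvE α κ' B ℓ else 0
  have hstep : ∀ ℓ ∈ Finset.Ico j k, stepE α κ' k B ℓ = B ℓ - (g (ℓ + 1) - g ℓ) := by
    intro ℓ hℓ
    simp only [Finset.mem_Ico] at hℓ
    simp only [stepE, sendE, g, hℓ.2, if_true]
    ring
  have htel := Finset.sum_Ico_sub g hj.le
  simp only [suffixSum, Finset.sum_congr rfl hstep, Finset.sum_sub_distrib, htel, g, hj,
    lt_irrefl, if_true, if_false]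
  ring

lemma recvE_le_min_of_pos {α κ' : ℝ} {B : ℕ → ℝ} {j : ℕ} (h : 0 < recvE α κ' B j) :
    recvE α κ' B j ≤ min α (κ' - B j) := by
  unfold recvE at h ⊢
  split_ifs at h ⊢ with h0
  · rw [h0]
  · exact le_rfl
  · exact absurd h (lt_irrefl 0)

lemma le_of_recvE_succ_pos {α κ' : ℝ} {B : ℕ → ℝ} {m : ℕ} (h : 0 < recvE α κ' B (m + 1)) :
    α ≤ B m := by
  by_contra hB
  simp [recvE, hB] at h

section Activation

variable {κ α : ℝ}

noncomputable def harvestA (κ α : ℝ) (m : ℕ) (C : ℕ → ℝ) : ℕ → ℝ :=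
  fun i => if m = 0 ∧ i = 0 then min (C 0 + α) κ else C i

noncomputable def transferA (κ α : ℝ) (k m : ℕ) (C : ℕ → ℝ) : ℕ → ℝ :=
  if m + 1 < k ∧ α ≤ C m ∧ C (m + 1) < κ then
    fun i => if i = m then C m - min α (κ - C (m + 1))
      else if i = m + 1 then C (m + 1) + min α (κ - C (m + 1)) else C i
  else C

lemma actA_eq_transferA_harvestA (m : ℕ) (C : ℕ → ℝ) :
    actA κ α k m C = transferA κ α k m (harvestA κ α m C) :=
  rfl

lemma le_harvestA (hα : 0 ≤ α) {C : ℕ → ℝ} (hC : C 0 ≤ κ) (m : ℕ) : C ≤ harvestA κ α m C := by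
  intro i
  unfold harvestA
  split_ifs with h
  · obtain ⟨-, rfl⟩ := h
    exact le_min (by linarith) hC
  · rfl

lemma harvestA_zero_of_le {C : ℕ → ℝ} (hC : C 0 ≤ κ - α) : harvestA κ α 0 C 0 = C 0 + α := by
  simp only [harvestA, and_self, if_true]
  exact min_eq_left (by linarith)

lemma harvestA_succ (m i : ℕ) (C : ℕ → ℝ) : harvestA κ α m C (i + 1) = C (i + 1) := by
  simp [harvestA]

lemma suffixSum_harvestA_succ (m : ℕ) (C : ℕ → ℝ) (j : ℕ) :
    suffixSum k (harvestA κ α m C) (j + 1) = suffixSum k C (j + 1) := by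
  refine Finset.sum_congr rfl fun ℓ hℓ => ?_
  obtain ⟨i, rfl⟩ := Nat.exists_eq_add_of_lt (Finset.mem_Ico.1 hℓ).1
  exact harvestA_succ m _ C

lemma suffixSum_transferA (m : ℕ) (C : ℕ → ℝ) (j : ℕ) :
    suffixSum k (transferA κ α k m C) j = suffixSum k C j +
      if (m + 1 < k ∧ α ≤ C m ∧ C (m + 1) < κ) ∧ j = m + 1 then min α (κ - C (m + 1)) else 0 := by
  unfold transferA
  by_cases hc : m + 1 < k ∧ α ≤ C m ∧ C (m + 1) < κ
  · rw [if_pos hc, suffixSum_move hc.1]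
    simp only [hc, true_and]
  · simp [hc]

lemma suffixSum_le_transferA (hα : 0 ≤ α) (m : ℕ) (C : ℕ → ℝ) (j : ℕ) :
    suffixSum k C j ≤ suffixSum k (transferA κ α k m C) j := by
  rw [suffixSum_transferA]
  split_ifs with h
  · linarith [le_min hα (sub_nonneg.2 h.1.2.2.le)]
  · simp

lemma suffixSum_transferA_of_le (hα : 0 < α) {m : ℕ} (hm : m + 1 < k) {C : ℕ → ℝ}
    (hsend : α ≤ C m) (hrecv : C (m + 1) ≤ κ - α) :
    suffixSum k (transferA κ α k m C) (m + 1) = suffixSum k C (m + 1) + α := by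
  rw [suffixSum_transferA, if_pos ⟨⟨hm, hsend, by linarith⟩, rfl⟩, min_eq_left (by linarith)]

lemma roundA_cons (m : ℕ) (L : List ℕ) (C : ℕ → ℝ) :
    roundA κ α k (m :: L) C = roundA κ α k L (actA κ α k m C) :=
  rfl

lemma roundA_append (s t : List ℕ) (C : ℕ → ℝ) :
    roundA κ α k (s ++ t) C = roundA κ α k t (roundA κ α k s C) :=
  List.foldl_append

lemma suffixSum_le_actA (hα : 0 ≤ α) {C : ℕ → ℝ} (hC : C 0 ≤ κ) (m j : ℕ) :
    suffixSum k C j ≤ suffixSum k (actA κ α k m C) j :=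
  (suffixSum_mono (le_harvestA hα hC m) j).trans (suffixSum_le_transferA hα m _ j)

end Activation

def Quantized (N : ℕ) (α : ℝ) (C : ℕ → ℝ) : Prop :=
  ∀ i, ∃ n : ℕ, n ≤ N ∧ C i = n * α

namespace Quantized

variable {N : ℕ} {α : ℝ} {C : ℕ → ℝ}

lemma le (hα : 0 ≤ α) (hC : Quantized N α C) (i : ℕ) : C i ≤ N * α := by
  obtain ⟨n, hnN, hn⟩ := hC i
  rw [hn]
  gcongr

lemma eq_zero_of_lt (hα : 0 < α) (hC : Quantized N α C) {i : ℕ} (hi : C i < α) : C i = 0 := by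
  obtain ⟨n, -, hn⟩ := hC i
  rw [hn] at hi ⊢
  have hn1 : (n : ℝ) < 1 := lt_of_mul_lt_mul_right (by rwa [one_mul]) hα.le
  have hn0 : n = 0 := Nat.lt_one_iff.1 (by exact_mod_cast hn1)
  rw [hn0, Nat.cast_zero, zero_mul]

lemma harvestA (hα : 0 ≤ α) (hC : Quantized N α C) (m : ℕ) :
    Quantized N α (harvestA (N * α) α m C) := by
  intro i
  unfold EnergyPath.harvestA
  split_ifs
  · obtain ⟨n, -, hn⟩ := hC 0
    refine ⟨min (n + 1) N, min_le_right _ _, ?_⟩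
    rw [hn, Nat.cast_min, min_mul_of_nonneg _ _ hα, Nat.cast_succ, add_one_mul]
  · exact hC i

lemma transferA (hα : 0 < α) (hC : Quantized N α C) (m : ℕ) :
    Quantized N α (transferA (N * α) α k m C) := by
  unfold EnergyPath.transferA
  split_ifs with hc
  · obtain ⟨-, hsend, hrecv⟩ := hc
    obtain ⟨a, haN, ha⟩ := hC m
    obtain ⟨b, -, hb⟩ := hC (m + 1)
    have ha1 : 1 ≤ a := by
      rcases Nat.eq_zero_or_pos a with rfl | ha1
      · simp only [ha, Nat.cast_zero, zero_mul] at hsend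
        linarith
      · exact ha1
    have hbN : b + 1 ≤ N := by
      have : (b : ℝ) < N := lt_of_mul_lt_mul_right (hb ▸ hrecv) hα.le
      exact_mod_cast this
    have hmove : min α (N * α - C (m + 1)) = α := by
      refine min_eq_left ?_
      have : ((b + 1 : ℕ) : ℝ) * α ≤ N * α := by gcongr
      push_cast at this
      linarith
    intro i
    simp only [hmove]
    split_ifs
    · exact ⟨a - 1, by omega, by rw [ha, Nat.cast_sub ha1]; push_cast; ring⟩
    · exact ⟨b + 1, hbN, by rw [hb]; push_cast; ring⟩
    · exact hC i
  · exact hC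

lemma actA (hα : 0 < α) (hC : Quantized N α C) (m : ℕ) :
    Quantized N α (actA (N * α) α k m C) :=
  (hC.harvestA hα.le m).transferA hα m

lemma roundA (hα : 0 < α) (L : List ℕ) (hC : Quantized N α C) :
    Quantized N α (roundA (N * α) α k L C) := by
  induction L generalizing C with
  | nil => exact hC
  | cons m L ih => exact ih (hC.actA hα m)

end Quantized

section Dominance

variable {N : ℕ} {α : ℝ} {B C : ℕ → ℝ}

lemma add_le_suffixSum_of_lt {κ' r : ℝ} {j : ℕ} (hj : j < k)
    (hdom : suffixSum k B (j + 1) ≤ suffixSum k C (j + 1)) (hr : r ≤ κ' - B j) (hfull : κ' < C j) :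
    suffixSum k B j + r ≤ suffixSum k C j := by
  rw [suffixSum_eq_add hj, suffixSum_eq_add hj]
  linarith

lemma add_recvE_zero_le_suffixSum_actA (hα : 0 < α) (hk : 0 < k) (hC : Quantized N α C)
    (hdom : ∀ j, suffixSum k B j ≤ suffixSum k C j) :
    suffixSum k B 0 + recvE α (N * α - α) B 0 ≤ suffixSum k (actA (N * α) α k 0 C) 0 := by
  have hr : recvE α (N * α - α) B 0 = min α (N * α - α - B 0) := if_pos rfl
  rcases le_or_gt (C 0) (N * α - α) with hroom | hfull
  · have hharvest : suffixSum k (harvestA (N * α) α 0 C) 0 = suffixSum k C 0 + α := by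
      rw [suffixSum_eq_add hk, suffixSum_eq_add hk, harvestA_zero_of_le hroom,
        suffixSum_harvestA_succ]
      ring
    calc suffixSum k B 0 + recvE α (N * α - α) B 0 ≤ suffixSum k C 0 + α := by
          linarith [hdom 0, hr ▸ min_le_left α (N * α - α - B 0)]
      _ = suffixSum k (harvestA (N * α) α 0 C) 0 := hharvest.symm
      _ ≤ _ := suffixSum_le_transferA hα.le 0 _ 0
  · calc suffixSum k B 0 + recvE α (N * α - α) B 0 ≤ suffixSum k C 0 :=
          add_le_suffixSum_of_lt hk (hdom 1) (hr ▸ min_le_right _ _) hfull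
      _ ≤ _ := suffixSum_le_actA hα.le (hC.le hα.le 0) 0 0

lemma add_recvE_succ_le_suffixSum_actA (hα : 0 < α) {m : ℕ} (hm : m + 1 < k)
    (hC : Quantized N α C) (hdom : ∀ j, suffixSum k B j ≤ suffixSum k C j)
    (hr : 0 < recvE α (N * α - α) B (m + 1)) :
    suffixSum k B (m + 1) + recvE α (N * α - α) B (m + 1)
      ≤ suffixSum k (actA (N * α) α k m C) (m + 1) := by
  set r := recvE α (N * α - α) B (m + 1)
  have hrmin : r ≤ min α (N * α - α - B (m + 1)) := recvE_le_min_of_pos hr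
  have hrα : r ≤ α := hrmin.trans (min_le_left _ _)
  set H := harvestA (N * α) α m C
  have hCH : C ≤ H := le_harvestA hα.le (hC.le hα.le 0) m
  rcases le_or_gt (C (m + 1)) (N * α - α) with hroom | hfull
  · rw [actA_eq_transferA_harvestA]
    rcases le_or_gt α (H m) with hsend | hempty
    · calc suffixSum k B (m + 1) + r ≤ suffixSum k H (m + 1) + α := by
            have hSH : suffixSum k H (m + 1) = suffixSum k C (m + 1) :=
              suffixSum_harvestA_succ m C m
            linarith [hdom (m + 1)]
        _ = suffixSum k (transferA (N * α) α k m H) (m + 1) :=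
          (suffixSum_transferA_of_le hα hm hsend ((harvestA_succ m m C).trans_le hroom)).symm
    · have hCm : C m = 0 := hC.eq_zero_of_lt hα ((hCH m).trans_lt hempty)
      calc suffixSum k B (m + 1) + r ≤ suffixSum k B m := by
            rw [suffixSum_eq_add (by omega : m < k)]
            linarith [le_of_recvE_succ_pos hr]
        _ ≤ suffixSum k C m := hdom m
        _ = suffixSum k C (m + 1) := by rw [suffixSum_eq_add (by omega), hCm, zero_add]
        _ ≤ suffixSum k H (m + 1) := suffixSum_mono hCH _
        _ ≤ _ := suffixSum_le_transferA hα.le m _ _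
  · calc suffixSum k B (m + 1) + r ≤ suffixSum k C (m + 1) :=
          add_le_suffixSum_of_lt hm (hdom (m + 2)) (hrmin.trans (min_le_right _ _)) hfull
      _ ≤ _ := suffixSum_le_actA hα.le (hC.le hα.le 0) m (m + 1)

lemma suffixSum_le_roundA (hα : 0 < α) (L : List ℕ) (hC : Quantized N α C) (j : ℕ) :
    suffixSum k C j ≤ suffixSum k (roundA (N * α) α k L C) j := by
  induction L generalizing C with
  | nil => exact le_rfl
  | cons m L ih => exact (suffixSum_le_actA hα.le (hC.le hα.le 0) m j).trans (ih (hC.actA hα m))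

lemma suffixSum_stepE_le_roundA (hα : 0 < α) {L : List ℕ} (hL : ∀ m < k, m ∈ L)
    (hC : Quantized N α C) (hdom : ∀ j, suffixSum k B j ≤ suffixSum k C j) (j : ℕ) :
    suffixSum k (stepE α (N * α - α) k B) j ≤ suffixSum k (roundA (N * α) α k L C) j := by
  rcases lt_or_ge j k with hj | hj
  swap
  · simp only [suffixSum_of_le hj, le_refl]
  rw [suffixSum_stepE hj]
  rcases le_or_gt (recvE α (N * α - α) B j) 0 with hr | hr
  · linarith [hdom j, suffixSum_le_roundA (k := k) hα L hC j]
  -- the sender of `j` is `j - 1`; for `j = 0` it is the root itself, as `0 - 1 = 0` in `ℕ`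
  obtain ⟨s, t, rfl⟩ := List.append_of_mem (hL (j - 1) (by omega))
  set C' := roundA (N * α) α k s C
  have hC' : Quantized N α C' := hC.roundA hα s
  have hdom' : ∀ j, suffixSum k B j ≤ suffixSum k C' j :=
    fun j => (hdom j).trans (suffixSum_le_roundA hα s hC j)
  have hgain : suffixSum k B j + recvE α (N * α - α) B j
      ≤ suffixSum k (actA (N * α) α k (j - 1) C') j := by
    cases j with
    | zero => exact add_recvE_zero_le_suffixSum_actA hα hj hC' hdom'
    | succ m => exact add_recvE_succ_le_suffixSum_actA hα hj hC' hdom' hr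
  rw [roundA_append, roundA_cons]
  exact hgain.trans (suffixSum_le_roundA hα t (hC'.actA hα _) j)

end Dominance

end EnergyPath

open EnergyPath in
theorem async_dominates_parallel_general (k N : ℕ) (κ α : ℝ)
    (hα : 0 < α) (hκ : κ = (N : ℝ) * α)
    (rounds : ℕ → List ℕ) (hfair : ∀ t, ∀ j < k, j ∈ rounds t) :
    ∀ (i j : ℕ),
      (∑ ℓ ∈ Finset.Ico j k, ((stepE α (κ - α) k)^[i] (fun _ => 0)) ℓ) ≤
        ∑ ℓ ∈ Finset.Ico j k, asyncCfg κ α k rounds i ℓ := by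
  subst hκ
  suffices h : ∀ i, Quantized N α (asyncCfg (N * α) α k rounds i) ∧
      ∀ j, suffixSum k ((stepE α (N * α - α) k)^[i] fun _ => 0) j
        ≤ suffixSum k (asyncCfg (N * α) α k rounds i) j from
    fun i j => (h i).2 j
  intro i
  induction i with
  | zero => exact ⟨fun _ => ⟨0, Nat.zero_le N, by simp [asyncCfg]⟩, fun _ => le_rfl⟩
  | succ i ih =>
    obtain ⟨hC, hdom⟩ := ih
    rw [Function.iterate_succ_apply']
    exact ⟨hC.roundA hα _, suffixSum_stepE_le_roundA hα (hfair i) hC hdom⟩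

/-- Dominance lemma: For any fair asynchronous activation sequence (every
particle activated at least once per round) on a path of `k` particles with capacity
`κ = N·α`, starting from the all-empty configuration, the asynchronous configuration after
round `i` dominates the greedy parallel configuration (with capacity `κ' = κ - α`) after
round `i`: every suffix sum of batteries in the asynchronous configuration is at least the
corresponding suffix sum in the parallel configuration. -/
theorem async_dominates_parallel (k N : ℕ) (κ α : ℝ)
    (hα : 0 < α) (hκ : κ = (N : ℝ) * α) (hN : 1 ≤ N) (hk : 0 < k)
    (rounds : ℕ → List ℕ) (hfair : ∀ t, ∀ j < k, j ∈ rounds t) :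
    ∀ (i j : ℕ),
      (∑ ℓ ∈ Finset.Ico j k, ((stepE α (κ - α) k)^[i] (fun _ => 0)) ℓ) ≤
        ∑ ℓ ∈ Finset.Ico j k, asyncCfg κ α k rounds i ℓ :=
  async_dominates_parallel_general k N κ α hα hκ rounds hfair
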